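/- The derivative of the cofactor map on 3×3 matrices is given by the tensor cross product: the Fréchet derivative of A ↦ cof A at A in direction B equals A × B, where (A × B)_{ij} = ε_{ikl} ε_{jmn} A_{km} B_{ln}. -/

import Mathlib

/-- The Levi-Civita permutation symbol on `{0,1,2}`. -/
noncomputable def eps (i j k : Fin 3) : ℝ :=
  if (i, j, k) = (0, 1, 2) ∨ (i, j, k) = (1, 2, 0) ∨ (i, j, k) = (2, 0, 1) then 1
  else if (i, j, k) = (0, 2, 1) ∨ (i, j, k) = (2, 1, 0) ∨ (i, j, k) = (1, 0, 2) then -1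
  else 0

/-- The tensor cross product `(A × B)_{ij} = ε_{ikl} ε_{jmn} A_{km} B_{ln}`. -/
noncomputable def tcross (A B : Matrix (Fin 3) (Fin 3) ℝ) : Matrix (Fin 3) (Fin 3) ℝ :=
  fun i j => ∑ k, ∑ l, ∑ m, ∑ n, eps i k l * eps j m n * A k m * B l n

/-!
Since `cof A = ½ A × A` and `×` is symmetric and bilinear,
`cof (A + t B) = cof A + t (A × B) + t² cof B`, a quadratic polynomial in `t` whose linear
coefficient is `A × B`.
-/

open Matrix

lemma eps_swap_right (i k l : Fin 3) : eps i l k = -eps i k l := by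
  fin_cases i <;> fin_cases k <;> fin_cases l <;> simp [eps, Fin.ext_iff]

lemma tcross_comm (A B : Matrix (Fin 3) (Fin 3) ℝ) : tcross A B = tcross B A := by
  ext i j
  simp only [tcross]
  -- exchange `k ↔ l` and `m ↔ n`; the two sign changes of `ε` cancel
  rw [Finset.sum_comm]
  refine Finset.sum_congr rfl fun k _ => Finset.sum_congr rfl fun l _ => ?_
  rw [Finset.sum_comm]
  refine Finset.sum_congr rfl fun m _ => Finset.sum_congr rfl fun n _ => ?_
  rw [eps_swap_right i l k, eps_swap_right j n m]
  ring

lemma tcross_add_left (A B C : Matrix (Fin 3) (Fin 3) ℝ) :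
    tcross (A + B) C = tcross A C + tcross B C := by
  ext i j
  simp only [tcross, Matrix.add_apply, mul_add, add_mul, Finset.sum_add_distrib]

lemma tcross_smul_left (t : ℝ) (A B : Matrix (Fin 3) (Fin 3) ℝ) :
    tcross (t • A) B = t • tcross A B := by
  ext i j
  simp only [tcross, Matrix.smul_apply, smul_eq_mul, Finset.mul_sum, mul_assoc, mul_left_comm t]

lemma tcross_add_right (A B C : Matrix (Fin 3) (Fin 3) ℝ) :
    tcross A (B + C) = tcross A B + tcross A C := by
  rw [tcross_comm, tcross_add_left, tcross_comm B, tcross_comm C]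

lemma tcross_smul_right (t : ℝ) (A B : Matrix (Fin 3) (Fin 3) ℝ) :
    tcross A (t • B) = t • tcross A B := by
  rw [tcross_comm, tcross_smul_left, tcross_comm]

lemma transpose_adjugate_eq_half_tcross (A : Matrix (Fin 3) (Fin 3) ℝ) :
    (adjugate A)ᵀ = (1 / 2 : ℝ) • tcross A A := by
  ext i j
  fin_cases i <;> fin_cases j <;>
    simp [adjugate_fin_three, tcross, eps, Fin.sum_univ_three] <;> ring

lemma transpose_adjugate_add_smul (A B : Matrix (Fin 3) (Fin 3) ℝ) (t : ℝ) :
    (adjugate (A + t • B))ᵀ = (adjugate A)ᵀ + t • tcross A B + t ^ 2 • (adjugate B)ᵀ := by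
  simp only [transpose_adjugate_eq_half_tcross, tcross_add_left, tcross_add_right,
    tcross_smul_left, tcross_smul_right, tcross_comm B A]
  module

lemma hasDerivAt_quadratic_zero (a b c : ℝ) :
    HasDerivAt (fun t : ℝ => a + t * b + t ^ 2 * c) b 0 := by
  have h : HasDerivAt (fun t : ℝ => a + t * b + t ^ 2 * c) (1 * b + (2 : ℕ) * 0 ^ 1 * c) 0 :=
    (((hasDerivAt_id' 0).mul_const b).const_add a).add ((hasDerivAt_pow 2 0).mul_const c)
  simpa using h

open Matrix in
/-- The derivative of the cofactor map `A ↦ cof A` at `A` in direction `B` is the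
tensor cross product `A × B`:  `d/dt|_{t=0} cof (A + t B) = A × B` (entrywise). -/
theorem cof_deriv (A B : Matrix (Fin 3) (Fin 3) ℝ) (i j : Fin 3) :
    HasDerivAt (fun t : ℝ => (Matrix.adjugate (A + t • B))ᵀ i j) (tcross A B i j) 0 := by
  simp only [transpose_adjugate_add_smul, Matrix.add_apply, Matrix.smul_apply, smul_eq_mul]
  exact hasDerivAt_quadratic_zero _ _ _
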